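/- arXiv:2506.21070 — 2 statements merged into one kernel-verified Lean document; each statement's English description precedes it below -/
import Mathlib

section
/- For α>0 and λ>0, the Laplace transform of t ↦ E_{α,1}(−λ t^α) equals z^{α−1}/(λ + z^α) for all real z > λ^{1/α}. -/
open MeasureTheory Real Set

/-- The real Mittag-Leffler function `E_{α,β}(x) = Σ_{k=0}^∞ x^k / Γ(αk+β)`. -/
noncomputable def mittagLeffler (α β x : ℝ) : ℝ :=
  ∑' k : ℕ, x ^ k / Real.Gamma (α * k + β)

/-!
Expand `E_{α,1}(c t^α)` in its power series. By Euler's integral for `Γ(αk+1)`, the `k`-th term has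
Laplace transform `c^k / z^(αk+1)`; the same computation with `|c|` shows that the integrals of the
norms form a convergent geometric series when `|c| < z^α`, so sum and integral may be interchanged.
Summing the geometric series gives `z^(α-1) / (z^α - c)`, and `c = -λ` is the theorem.
-/
section LaplaceSeries

variable {α z : ℝ}

lemma hasSum_pow_div_rpow_mul_add_one {c : ℝ} (hz : 0 < z) (hc : |c| < z ^ α) :
    HasSum (fun k : ℕ => c ^ k / z ^ (α * k + 1)) (z ^ (α - 1) / (z ^ α - c)) := by
  have hzα : 0 < z ^ α := rpow_pos_of_pos hz α
  have hratio : |c / z ^ α| < 1 := by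
    rwa [abs_div, abs_of_pos hzα, div_lt_one hzα]
  have hterm : ∀ k : ℕ, c ^ k / z ^ (α * k + 1) = z⁻¹ * (c / z ^ α) ^ k := fun k => by
    rw [rpow_add hz, rpow_one, rpow_mul_natCast hz.le, div_pow]
    field_simp
  have hlimit : z⁻¹ * (1 - c / z ^ α)⁻¹ = z ^ (α - 1) / (z ^ α - c) := by
    have : z ^ α - c ≠ 0 := by linarith [le_abs_self c]
    rw [rpow_sub_one hz.ne']
    field_simp
  simpa only [hterm, hlimit] using (hasSum_geometric_of_abs_lt_one hratio).mul_left z⁻¹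

-- The right-hand side has the shape of `integral_rpow_mul_exp_neg_mul_Ioi`.
lemma exp_neg_mul_mittagLeffler_term_eq (c : ℝ) (k : ℕ) {t : ℝ} (ht : 0 < t) :
    exp (-z * t) * ((c * t ^ α) ^ k / Gamma (α * k + 1)) =
      c ^ k / Gamma (α * k + 1) * (t ^ (α * k + 1 - 1) * exp (-(z * t))) := by
  rw [add_sub_cancel_right, rpow_mul_natCast ht.le, neg_mul]
  ring

lemma integrableOn_exp_neg_mul_mittagLeffler_term (hα : 0 ≤ α) (hz : 0 < z) (c : ℝ) (k : ℕ) :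
    IntegrableOn (fun t => exp (-z * t) * ((c * t ^ α) ^ k / Gamma (α * k + 1))) (Ioi 0) := by
  have hs : -1 < α * k + 1 - 1 := by linarith [show 0 ≤ α * k by positivity]
  have := (integrableOn_rpow_mul_exp_neg_mul_rpow hs one_pos hz).const_mul
    (c ^ k / Gamma (α * k + 1))
  refine IntegrableOn.congr_fun this (fun t ht => ?_) measurableSet_Ioi
  rw [rpow_one, exp_neg_mul_mittagLeffler_term_eq c k ht, neg_mul]

lemma integral_exp_neg_mul_mittagLeffler_term (hα : 0 ≤ α) (hz : 0 < z) (c : ℝ) (k : ℕ) :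
    ∫ t in Ioi 0, exp (-z * t) * ((c * t ^ α) ^ k / Gamma (α * k + 1)) =
      c ^ k / z ^ (α * k + 1) := by
  have hs : 0 < α * k + 1 := by positivity
  rw [setIntegral_congr_fun measurableSet_Ioi
      (fun t ht => exp_neg_mul_mittagLeffler_term_eq c k ht),
    integral_const_mul, integral_rpow_mul_exp_neg_mul_Ioi hs hz, one_div, inv_rpow hz.le]
  field_simp [(Gamma_pos_of_pos hs).ne']

lemma norm_exp_neg_mul_mittagLeffler_term (hα : 0 ≤ α) (c : ℝ) (k : ℕ) {t : ℝ} (ht : 0 < t) :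
    ‖exp (-z * t) * ((c * t ^ α) ^ k / Gamma (α * k + 1))‖ =
      exp (-z * t) * ((|c| * t ^ α) ^ k / Gamma (α * k + 1)) := by
  have hΓ : 0 < Gamma (α * k + 1) := Gamma_pos_of_pos (by positivity)
  rw [norm_mul, norm_div, norm_pow, norm_mul, norm_of_nonneg (exp_pos _).le,
    norm_of_nonneg (rpow_nonneg ht.le α), norm_of_nonneg hΓ.le, norm_eq_abs]

theorem integral_exp_neg_mul_mittagLeffler (hα : 0 ≤ α) (hz : 0 < z) {c : ℝ} (hc : |c| < z ^ α) :
    ∫ t in Ioi 0, exp (-z * t) * mittagLeffler α 1 (c * t ^ α) = z ^ (α - 1) / (z ^ α - c) := by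
  have hnorm : ∀ k : ℕ, ∫ t in Ioi 0, ‖exp (-z * t) * ((c * t ^ α) ^ k / Gamma (α * k + 1))‖ =
      |c| ^ k / z ^ (α * k + 1) := fun k => by
    rw [setIntegral_congr_fun measurableSet_Ioi
      (fun t ht => norm_exp_neg_mul_mittagLeffler_term hα c k ht),
      integral_exp_neg_mul_mittagLeffler_term hα hz]
  have hsum := hasSum_integral_of_summable_integral_norm
    (integrableOn_exp_neg_mul_mittagLeffler_term hα hz c)
    (by simpa only [hnorm] using
      (hasSum_pow_div_rpow_mul_add_one hz (by rwa [abs_abs])).summable)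
  simp only [integral_exp_neg_mul_mittagLeffler_term hα hz, tsum_mul_left] at hsum
  exact hsum.unique (hasSum_pow_div_rpow_mul_add_one hz hc)

end LaplaceSeries

/-- For `α > 0` and `λ > 0`, the Laplace transform of `t ↦ E_{α,1}(−λ t^α)` equals
`z^(α−1)/(λ + z^α)` for all real `z > λ^(1/α)`. -/
theorem laplace_mittagLeffler (α lam : ℝ) (hα : 0 < α) (hlam : 0 < lam) :
    ∀ z : ℝ, lam ^ (1 / α) < z →
      ∫ t in Set.Ioi (0:ℝ), Real.exp (-z * t) * mittagLeffler α 1 (-lam * t ^ α) =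
        z ^ (α - 1) / (lam + z ^ α) := by
  intro z hz
  have hz0 : 0 < z := (rpow_pos_of_pos hlam _).trans hz
  have hlam_lt : lam < z ^ α := by
    simpa only [← rpow_mul hlam.le, one_div_mul_cancel hα.ne', rpow_one] using
      rpow_lt_rpow (rpow_nonneg hlam.le _) hz hα
  rw [integral_exp_neg_mul_mittagLeffler hα.le hz0 (by rwa [abs_neg, abs_of_pos hlam]),
    sub_neg_eq_add, add_comm]
end

section
/- For 0<α<1, λ>0 and all t>0, the bound λ^{1/2} t^{α/2} E_{α,1}(−λ t^α) ≤ c · √(λ t^α)/(1+λ t^α) holds with the constant c from the Mittag-Leffler decay estimate; in particular t ↦ (λ^{1/2} t^{α/2} E_{α,1}(−λ t^α))² t^{−α} is integrable on (0,T) with integral bounded by c² T^{1−α}/(1−α), uniformly in λ>0. -/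
open Real MeasureTheory Set

/-- A countable sum of measurable real-valued functions is measurable. -/
lemma measurable_tsum_real {f : ℕ → ℝ → ℝ} (hf : ∀ k, Measurable (f k)) :
    Measurable fun x => ∑' k, f k x := by
  set S : Set ℝ := ⋃ C : ℕ, ⋂ n : ℕ, {x | ∑ k ∈ Finset.range n, |f k x| ≤ C} with hS
  have hSmeas : MeasurableSet S := by
    refine MeasurableSet.iUnion fun C => MeasurableSet.iInter fun n => ?_
    exact measurableSet_le (Finset.measurable_sum _ fun k _ => (hf k).abs) measurable_const
  have hSiff : ∀ x, x ∈ S ↔ Summable fun k => f k x := by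
    intro x
    constructor
    · intro hx
      simp only [hS, mem_iUnion, mem_iInter, mem_setOf_eq] at hx
      obtain ⟨C, hC⟩ := hx
      rw [← summable_abs_iff]
      exact summable_of_sum_range_le (fun n => abs_nonneg _) hC
    · intro hx
      rw [← summable_abs_iff] at hx
      simp only [hS, mem_iUnion, mem_iInter, mem_setOf_eq]
      refine ⟨⌈∑' k, |f k x|⌉₊, fun n => ?_⟩
      exact le_trans (Summable.sum_le_tsum _ (fun k _ => abs_nonneg _) hx) (Nat.le_ceil _)
  have key : ∀ x, Filter.Tendsto
      (fun n => S.indicator (fun y => ∑ k ∈ Finset.range n, f k y) x) Filter.atTop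
      (nhds (∑' k, f k x)) := by
    intro x
    by_cases hx : x ∈ S
    · simp only [indicator_of_mem hx]
      exact ((hSiff x).1 hx).hasSum.tendsto_sum_nat
    · simp only [indicator_of_notMem hx]
      rw [tsum_eq_zero_of_not_summable (fun h => hx ((hSiff x).2 h))]
      exact tendsto_const_nhds
  exact measurable_of_tendsto_metrizable
    (fun n => Measurable.indicator (Finset.measurable_sum _ fun k _ => hf k) hSmeas)
    (tendsto_pi_nhds.2 key)

lemma measurable_mittagLeffler (α β : ℝ) : Measurable (mittagLeffler α β) := by
  unfold mittagLeffler
  exact measurable_tsum_real fun k => (measurable_id.pow_const k).div_const _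

/-- For `0<α<1`, `λ>0`, given the Mittag-Leffler decay estimate
`0 ≤ E_{α,1}(−s) ≤ c/(1+s)` for `s ≥ 0`, the bound
`λ^(1/2) t^(α/2) E_{α,1}(−λ t^α) ≤ c √(λ t^α)/(1+λ t^α)` holds for all `t>0`;
in particular `t ↦ (λ^(1/2) t^(α/2) E_{α,1}(−λ t^α))² t^(−α)` is integrable on `(0,T)`
with integral at most `c² T^(1−α)/(1−α)`, uniformly in `λ > 0`. -/
theorem mittagLeffler_weighted_bound (α : ℝ) (hα : 0 < α) (hα1 : α < 1)
    (c : ℝ) (hc : 0 < c)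
    (hdecay : ∀ s : ℝ, 0 ≤ s → 0 ≤ mittagLeffler α 1 (-s) ∧
      mittagLeffler α 1 (-s) ≤ c / (1 + s))
    (lam : ℝ) (hlam : 0 < lam) (T : ℝ) (hT : 0 < T) :
    (∀ t : ℝ, 0 < t →
      Real.sqrt lam * t ^ (α / 2) * mittagLeffler α 1 (-(lam * t ^ α)) ≤
        c * Real.sqrt (lam * t ^ α) / (1 + lam * t ^ α)) ∧
    IntegrableOn
      (fun t : ℝ =>
        (Real.sqrt lam * t ^ (α / 2) * mittagLeffler α 1 (-(lam * t ^ α))) ^ 2 * t ^ (-α))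
      (Set.Ioo 0 T) ∧
    (∫ t in Set.Ioo (0:ℝ) T,
        (Real.sqrt lam * t ^ (α / 2) * mittagLeffler α 1 (-(lam * t ^ α))) ^ 2 * t ^ (-α)) ≤
      c ^ 2 * T ^ (1 - α) / (1 - α) := by
  have hx : ∀ t : ℝ, 0 < t → 0 < lam * t ^ α := fun t ht =>
    mul_pos hlam (Real.rpow_pos_of_pos ht α)
  have hsqrt : ∀ t : ℝ, 0 < t →
      Real.sqrt lam * t ^ (α / 2) = Real.sqrt (lam * t ^ α) := by
    intro t ht
    rw [Real.sqrt_mul hlam.le, Real.sqrt_eq_rpow (t ^ α), ← Real.rpow_mul ht.le,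
      mul_one_div]
  have hbound : ∀ t : ℝ, 0 < t →
      Real.sqrt lam * t ^ (α / 2) * mittagLeffler α 1 (-(lam * t ^ α)) ≤
        c * Real.sqrt (lam * t ^ α) / (1 + lam * t ^ α) := by
    intro t ht
    obtain ⟨hE0, hE1⟩ := hdecay (lam * t ^ α) (hx t ht).le
    rw [hsqrt t ht]
    calc Real.sqrt (lam * t ^ α) * mittagLeffler α 1 (-(lam * t ^ α))
        ≤ Real.sqrt (lam * t ^ α) * (c / (1 + lam * t ^ α)) :=
          mul_le_mul_of_nonneg_left hE1 (Real.sqrt_nonneg _)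
      _ = c * Real.sqrt (lam * t ^ α) / (1 + lam * t ^ α) := by ring
  have hptw : ∀ t ∈ Set.Ioo (0:ℝ) T,
      (Real.sqrt lam * t ^ (α / 2) * mittagLeffler α 1 (-(lam * t ^ α))) ^ 2 * t ^ (-α) ≤
        c ^ 2 * t ^ (-α) := by
    intro t ht
    obtain ⟨ht0, -⟩ := ht
    obtain ⟨hE0, hE1⟩ := hdecay (lam * t ^ α) (hx t ht0).le
    have hxpos := hx t ht0
    have h1 : 0 < 1 + lam * t ^ α := by linarith
    have hf0 : 0 ≤ Real.sqrt lam * t ^ (α / 2) * mittagLeffler α 1 (-(lam * t ^ α)) := by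
      have := Real.rpow_pos_of_pos ht0 (α / 2)
      positivity
    have h3 : c * Real.sqrt (lam * t ^ α) / (1 + lam * t ^ α) ≤ c := by
      rw [div_le_iff₀ h1]
      have hs : Real.sqrt (lam * t ^ α) ≤ 1 + lam * t ^ α := by
        nlinarith [Real.sq_sqrt hxpos.le, Real.sqrt_nonneg (lam * t ^ α)]
      nlinarith [Real.sqrt_nonneg (lam * t ^ α)]
    have hsq : (Real.sqrt lam * t ^ (α / 2) * mittagLeffler α 1 (-(lam * t ^ α))) ^ 2 ≤
        c ^ 2 := pow_le_pow_left₀ hf0 ((hbound t ht0).trans h3) 2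
    exact mul_le_mul_of_nonneg_right hsq (Real.rpow_pos_of_pos ht0 _).le
  have hmeas : Measurable (fun t : ℝ =>
      (Real.sqrt lam * t ^ (α / 2) * mittagLeffler α 1 (-(lam * t ^ α))) ^ 2 * t ^ (-α)) := by
    have h1 : Measurable fun t : ℝ => t ^ (α / 2) := measurable_id'.pow_const _
    have h2 : Measurable fun t : ℝ => t ^ (-α) := measurable_id'.pow_const _
    have h3 : Measurable fun t : ℝ => mittagLeffler α 1 (-(lam * t ^ α)) :=
      (measurable_mittagLeffler α 1).comp
        ((measurable_const.mul (measurable_id'.pow_const _)).neg)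
    exact (((measurable_const.mul h1).mul h3).pow_const 2).mul h2
  have hint : IntegrableOn (fun t : ℝ => c ^ 2 * t ^ (-α)) (Set.Ioo 0 T) := by
    have h : IntervalIntegrable (fun t : ℝ => t ^ (-α)) volume 0 T :=
      intervalIntegral.intervalIntegrable_rpow' (by linarith)
    exact (h.1.mono_set Set.Ioo_subset_Ioc_self).const_mul _
  have hIntMain : IntegrableOn (fun t : ℝ =>
      (Real.sqrt lam * t ^ (α / 2) * mittagLeffler α 1 (-(lam * t ^ α))) ^ 2 * t ^ (-α))
      (Set.Ioo 0 T) := by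
    refine Integrable.mono' hint hmeas.aestronglyMeasurable ?_
    rw [ae_restrict_iff' measurableSet_Ioo]
    filter_upwards with t ht
    have h0 : (0:ℝ) ≤ t ^ (-α) := (Real.rpow_pos_of_pos ht.1 _).le
    rw [Real.norm_eq_abs, abs_of_nonneg (mul_nonneg (sq_nonneg _) h0)]
    exact hptw t ht
  have hval : (∫ t in Set.Ioo (0:ℝ) T, c ^ 2 * t ^ (-α)) =
      c ^ 2 * T ^ (1 - α) / (1 - α) := by
    rw [← integral_Ioc_eq_integral_Ioo, ← intervalIntegral.integral_of_le hT.le,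
      intervalIntegral.integral_const_mul]
    rw [integral_rpow (Or.inl (by linarith : (-1:ℝ) < -α))]
    rw [Real.zero_rpow (by linarith : -α + 1 ≠ 0)]
    have : -α + 1 = 1 - α := by ring
    rw [this]
    ring
  refine ⟨hbound, hIntMain, ?_⟩
  calc (∫ t in Set.Ioo (0:ℝ) T,
        (Real.sqrt lam * t ^ (α / 2) * mittagLeffler α 1 (-(lam * t ^ α))) ^ 2 * t ^ (-α))
      ≤ ∫ t in Set.Ioo (0:ℝ) T, c ^ 2 * t ^ (-α) :=
        setIntegral_mono_on hIntMain hint measurableSet_Ioo hptw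
    _ = c ^ 2 * T ^ (1 - α) / (1 - α) := hval
end
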